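/- Let p be a symplectic partition of 2n and p^G its Sp-expansion. Then p^G dominates p in the dominance order on partitions: for every k, the sum of the k largest parts of p^G is at least the sum of the k largest parts of p. -/

import Mathlib

/-- A symplectic partition of `m`: a non-increasing list of positive integers summing to `m`
in which every odd part occurs with even multiplicity. -/
def IsSymplecticPartition (l : List ℕ) (m : ℕ) : Prop :=
  l.Pairwise (· ≥ ·) ∧ (∀ a ∈ l, 0 < a) ∧ (∀ a : ℕ, Odd a → Even (l.count a)) ∧ l.sum = m

/-- The number of even parts of `l` (with multiplicity) that are greater than `d`. -/
def evenAbove (l : List ℕ) (d : ℕ) : ℕ :=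
  l.countP (fun a => decide (Even a ∧ d < a))

/-- A symplectic partition is special if the number of even parts greater than
any odd part is even. -/
def SpecialP (l : List ℕ) : Prop :=
  ∀ d ∈ l, Odd d → Even (evenAbove l d)

/-- `j` (0-based) is the head of a replaced pair: in 1-based indexing this is an index `2i`
with `p_{2i} = p_{2i+1}` odd and `p_{2i-1} ≠ p_{2i}`. -/
def replacedHead (l : List ℕ) (j : ℕ) : Bool :=
  decide (j % 2 = 1) && decide (j + 1 < l.length) &&
  decide (l.getD j 0 = l.getD (j + 1) 0) && decide (Odd (l.getD j 0)) &&
  decide (l.getD (j - 1) 0 ≠ l.getD j 0)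

/-- The raw Sp-expansion: each replaced pair `(p, p)` becomes `(p+1, p-1)`. -/
def spExpansion (l : List ℕ) : List ℕ :=
  List.ofFn (fun j : Fin l.length =>
    if replacedHead l (j : ℕ) then l.getD (j : ℕ) 0 + 1
    else if replacedHead l ((j : ℕ) - 1) then l.getD (j : ℕ) 0 - 1
    else l.getD (j : ℕ) 0)

/-- The Sp-expansion `p^G` of a symplectic partition, with zero parts removed. -/
def spExpand (l : List ℕ) : List ℕ := (spExpansion l).filter (· != 0)

/-- The sum of the `k` largest parts of `l`. -/
def largestSum (l : List ℕ) (k : ℕ) : ℕ :=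
  ((((l : Multiset ℕ).sort (· ≤ ·)).reverse).take k).sum

/-- Dominance order on partitions: `Dominates a b` means `a ≥ b`. -/
def Dominates (a b : List ℕ) : Prop := ∀ k : ℕ, largestSum b k ≤ largestSum a k


/-!
Replacing a pair `(p, p)` by `(p + 1, p - 1)` raises the partial sum ending between the two entries
by one and leaves every other partial sum unchanged, so the partial sums of the expanded list
dominate those of the partition entrywise. The partition is non-increasing, so its partial sums
are the sums of its largest parts, whereas the first `k` entries of the expansion are some `k`
parts of `p^G` and hence sum to at most its `k` largest parts.
-/

namespace List

lemma sum_take_succ_eq_add_getD (r : List ℕ) (k : ℕ) :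
    (r.take (k + 1)).sum = (r.take k).sum + r.getD k 0 := by
  rw [take_add_one, sum_append, getD_eq_getElem?_getD]
  cases r[k]? <;> simp

lemma sum_take_le_sum_take_of_le (r : List ℕ) {j k : ℕ} (h : j ≤ k) :
    (r.take j).sum ≤ (r.take k).sum :=
  (take_sublist_take_left h).sum_le_sum fun _ _ => Nat.zero_le _

lemma sum_take_le_sum_take_cons {a : ℕ} {r : List ℕ} (ha : ∀ x ∈ r, x ≤ a) :
    ∀ m, (r.take m).sum ≤ ((a :: r).take m).sum
  | 0 => le_rfl
  | m + 1 => by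
    have hm : r.getD m 0 ≤ a := by
      rw [getD_eq_getElem?_getD]
      cases hx : r[m]? with
      | none => exact Nat.zero_le _
      | some x => exact ha x (mem_of_getElem? hx)
    rw [sum_take_succ_eq_add_getD, take_succ_cons, sum_cons]
    omega

lemma Sublist.sum_le_sum_take_of_pairwise_ge {t r : List ℕ} (h : t <+ r)
    (hr : r.Pairwise (· ≥ ·)) : t.sum ≤ (r.take t.length).sum := by
  induction h with
  | slnil => simp
  | cons a _ ih =>
    exact (ih hr.of_cons).trans
      (sum_take_le_sum_take_cons (fun _ hx => rel_of_pairwise_cons hr hx) _)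
  | cons_cons a _ ih => simpa using ih hr.of_cons

end List

open List

lemma largestSum_eq_sum_take {l : List ℕ} (hl : l.Pairwise (· ≥ ·)) (k : ℕ) :
    largestSum l k = (l.take k).sum := by
  have hsort : (l : Multiset ℕ).sort (· ≤ ·) = l.reverse := by
    refine Perm.eq_of_pairwise' (Multiset.pairwise_sort _ _) (pairwise_reverse.mpr hl) ?_
    rw [← Multiset.coe_eq_coe, Multiset.sort_eq, Multiset.coe_reverse]
  rw [largestSum, hsort, reverse_reverse]

lemma List.Subperm.sum_le_largestSum {t m : List ℕ} (h : t <+~ m) {k : ℕ} (hk : t.length ≤ k) :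
    t.sum ≤ largestSum m k := by
  have hsorted (s : Multiset ℕ) : ((s.sort (· ≤ ·)).reverse).Pairwise (· ≥ ·) :=
    pairwise_reverse.mpr (Multiset.pairwise_sort _ _)
  set r := ((m : Multiset ℕ).sort (· ≤ ·)).reverse
  set t' := ((t : Multiset ℕ).sort (· ≤ ·)).reverse
  have hperm : t' ~ t := by
    rw [← Multiset.coe_eq_coe, Multiset.coe_reverse, Multiset.sort_eq]
  have hsub : t' <+ r := by
    refine sublist_of_subperm_of_pairwise ?_ (hsorted t) (hsorted m)
    rw [← Multiset.coe_le, Multiset.coe_reverse, Multiset.coe_reverse, Multiset.sort_eq,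
      Multiset.sort_eq, Multiset.coe_le]
    exact h
  calc t.sum = t'.sum := hperm.sum_eq.symm
    _ ≤ (r.take t'.length).sum := hsub.sum_le_sum_take_of_pairwise_ge (hsorted m)
    _ ≤ (r.take k).sum := sum_take_le_sum_take_of_le r (hperm.length_eq ▸ hk)

lemma replacedHead_iff {l : List ℕ} {j : ℕ} :
    replacedHead l j = true ↔ j % 2 = 1 ∧ j + 1 < l.length ∧
      l.getD j 0 = l.getD (j + 1) 0 ∧ Odd (l.getD j 0) ∧ l.getD (j - 1) 0 ≠ l.getD j 0 := by
  simp [replacedHead, and_assoc]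

lemma getD_spExpansion (l : List ℕ) (k : ℕ) :
    (spExpansion l).getD k 0 =
      if k < l.length then
        (if replacedHead l k then l.getD k 0 + 1
         else if replacedHead l (k - 1) then l.getD k 0 - 1
         else l.getD k 0)
      else 0 := by
  rw [getD_eq_getElem?_getD, spExpansion, List.getElem?_ofFn]
  split <;> simp_all

lemma getD_add_le_getD_spExpansion_add (l : List ℕ) (k : ℕ) :
    l.getD k 0 + (replacedHead l k).toNat ≤
      (spExpansion l).getD k 0 + (replacedHead l (k - 1)).toNat := by
  rw [getD_spExpansion]
  by_cases hk : replacedHead l k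
  · have := (replacedHead_iff.mp hk).2.1
    simp [hk, show k < l.length by omega]
  by_cases hk' : replacedHead l (k - 1)
  · obtain ⟨hpar, hlen, heq, hodd, -⟩ := replacedHead_iff.mp hk'
    have hpos : k ≠ 0 := by rintro rfl; simp at hpar
    rw [Nat.sub_add_cancel (Nat.one_le_iff_ne_zero.mpr hpos)] at hlen heq
    have : 0 < l.getD k 0 := heq ▸ hodd.pos
    simp [hk, hk', hlen]
    omega
  · split_ifs <;> simp_all

lemma sum_take_add_le_sum_take_spExpansion (l : List ℕ) (k : ℕ) :
    (l.take k).sum + (replacedHead l (k - 1)).toNat ≤ ((spExpansion l).take k).sum := by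
  induction k with
  | zero => simp [replacedHead]
  | succ k ih =>
    rw [sum_take_succ_eq_add_getD, sum_take_succ_eq_add_getD]
    have := getD_add_le_getD_spExpansion_add l k
    simp only [Nat.add_sub_cancel]
    omega

/-- The Sp-expansion dominates the original partition in the dominance order:
for every `k`, the sum of the `k` largest parts of `p^G` is at least that of `p`. -/
theorem spExpand_dominates (n : ℕ) (l : List ℕ)
    (h : IsSymplecticPartition l (2 * n)) :
    Dominates (spExpand l) l := by
  intro k
  set t := ((spExpansion l).take k).filter (· != 0)
  have ht : t <+ spExpand l := (take_sublist _ _).filter _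
  have htk : t.length ≤ k := (length_filter_le _ _).trans (length_take_le _ _)
  calc largestSum l k = (l.take k).sum := largestSum_eq_sum_take h.1 k
    _ ≤ ((spExpansion l).take k).sum :=
        (Nat.le_add_right _ _).trans (sum_take_add_le_sum_take_spExpansion l k)
    _ = t.sum := (sum_filter_bne_zero _).symm
    _ ≤ largestSum (spExpand l) k := ht.subperm.sum_le_largestSum htk
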